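/- Let (B, σ, D) be a Harnisch–Kirchberg system and let J be a semi-invariant closed two-sided ideal of D. Then σ^i(j)·σ^k(e) ∈ σ^{max(i,k)}(J) for all i, k ∈ ℤ, j ∈ J, e ∈ D; and consequently J_σ is a closed two-sided ideal of the C*-algebra D_σ satisfying σ(J_σ) = J_σ. -/

import Mathlib

noncomputable section

variable {B : Type*} [NonUnitalCStarAlgebra B]

noncomputable instance : Group (B ≃⋆ₐ[ℂ] B) where
  mul f g := g.trans f
  one := StarAlgEquiv.refl _ _
  inv := StarAlgEquiv.symm
  mul_assoc f g h := rfl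
  one_mul f := rfl
  mul_one f := rfl
  inv_mul_cancel f := by ext x; exact f.symm_apply_apply x

/-- The norm-closed linear span of `{x * y : x ∈ X, y ∈ Y}`. -/
def mulSpan (X Y : Set B) : Set B :=
  closure ↑(Submodule.span ℂ {z : B | ∃ x ∈ X, ∃ y ∈ Y, z = x * y})

/-- `D_{k,ℓ}`: sums `x_{k-1} + ⋯ + x_{ℓ-1}` with `x_j ∈ σ^j(D)`. -/
def Dfin (σ : B ≃⋆ₐ[ℂ] B) (D : Set B) (k ℓ : ℤ) : Set B :=
  {x | ∃ f : ℤ → B, (∀ j ∈ Finset.Icc (k-1) (ℓ-1), f j ∈ ⇑(σ ^ j) '' D) ∧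
      x = ∑ j ∈ Finset.Icc (k-1) (ℓ-1), f j}

/-- `D_{k,∞}`. -/
def DInfR (σ : B ≃⋆ₐ[ℂ] B) (D : Set B) (k : ℤ) : Set B :=
  closure (⋃ n : ℕ, Dfin σ D k (k + n))

/-- `D_{-∞,k}`. -/
def DInfL (σ : B ≃⋆ₐ[ℂ] B) (D : Set B) (k : ℤ) : Set B :=
  closure (⋃ n : ℕ, Dfin σ D (k - n) k)

/-- `D_σ`. -/
def Dsig (σ : B ≃⋆ₐ[ℂ] B) (D : Set B) : Set B :=
  closure (⋃ n : ℕ, Dfin σ D (-(n:ℤ)) n)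

/-- Norm-closed *-subalgebra, as a predicate on subsets. -/
def IsCStarSubset (S : Set B) : Prop :=
  IsClosed S ∧ (0:B) ∈ S ∧ (∀ x ∈ S, ∀ y ∈ S, x + y ∈ S) ∧
    (∀ (c : ℂ), ∀ x ∈ S, c • x ∈ S) ∧ (∀ x ∈ S, ∀ y ∈ S, x * y ∈ S) ∧
    (∀ x ∈ S, star x ∈ S)

/-- Harnisch–Kirchberg system. -/
def IsHKSystem (σ : B ≃⋆ₐ[ℂ] B) (D : Set B) : Prop :=
  IsCStarSubset D ∧
  mulSpan D (⇑σ '' D) = ⇑σ '' D ∧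
  D ∩ ⇑σ '' D = {0} ∧
  (∀ d ∈ D, (∀ e ∈ D, d * σ e = 0 ∧ σ e * d = 0) → d = 0)

/-- Closed two-sided ideal `I` of a C*-subalgebra `C` (both given as subsets). -/
def IsClosedIdealIn (C I : Set B) : Prop :=
  I ⊆ C ∧ IsClosed I ∧ (0:B) ∈ I ∧ (∀ x ∈ I, ∀ y ∈ I, x + y ∈ I) ∧
    (∀ (c : ℂ), ∀ x ∈ I, c • x ∈ I) ∧ (∀ c ∈ C, ∀ j ∈ I, c * j ∈ I ∧ j * c ∈ I)

/-- Essential closed two-sided ideal. -/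
def IsEssentialIdealIn (C I : Set B) : Prop :=
  IsClosedIdealIn C I ∧ ∀ x ∈ C, (∀ j ∈ I, x * j = 0 ∧ j * x = 0) → x = 0

/-!
Induction on `n`, using `σ(D) ⊆ D·σ(D)` and semi-invariance, gives `J·σⁿ(D) ⊆ σⁿ(J)`; for `J = D`
this is `D·σⁿ(D) ⊆ σⁿ(D)`, and taking adjoints gives `σⁿ(D)·D ⊆ σⁿ(D)`. For `σⁿ(J)·D ⊆ σⁿ(J)`
write `j ∈ J` as a limit of products `j·u` with `u` in the C⋆-algebra generated by `j⋆j`, which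
lies in `J`; the same approximation shows that `J` is self-adjoint. Translating by `σ^min(i,k)`
gives the product rule for all `i, k`. Finally, `J_σ` is the closure of the linear span of the
orbit `⋃ₚ σᵖ(J)`, which `σ` permutes and which the orbit of `D` multiplies into itself on both
sides.
-/

open Filter Topology

lemma norm_sub_mul_sq_le (x : B) {e : B} (he : IsSelfAdjoint e) (he₁ : ‖e‖ ≤ 1) :
    ‖x - x * e‖ ^ 2 ≤ 2 * ‖star x * x - star x * x * e‖ := by
  set y := star x * x - star x * x * e
  have hconj : star (x - x * e) * (x - x * e) = y - e * y := by
    simp only [y, star_sub, star_mul, he.star_eq]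
    noncomm_ring
  calc ‖x - x * e‖ ^ 2 = ‖y - e * y‖ := by rw [← hconj, CStarRing.norm_star_mul_self, sq]
    _ ≤ ‖y‖ + ‖e‖ * ‖y‖ := (norm_sub_le _ _).trans (by gcongr; exact norm_mul_le _ _)
    _ ≤ 2 * ‖y‖ := by nlinarith [norm_nonneg y]

open NonUnitalStarAlgebra in
lemma exists_tendsto_mul_elemental (x : B) :
    ∃ l : Filter B, l.NeBot ∧ (∀ᶠ e in l, e ∈ elemental ℂ (star x * x)) ∧
      Tendsto (x * ·) l (𝓝 x) ∧ Tendsto (· * star x) l (𝓝 (star x)) := by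
  set a := star x * x
  let E := elemental ℂ a
  let _ := CStarAlgebra.spectralOrder E
  let _ := CStarAlgebra.spectralOrderedRing E
  set l := CStarAlgebra.approximateUnit E
  have hl := CStarAlgebra.increasingApproximateUnit E
  have hsa : ∀ᶠ e : E in l, IsSelfAdjoint (e : B) :=
    hl.eventually_isSelfAdjoint.mono fun e he => he.map (NonUnitalStarSubalgebraClass.subtype E)
  have hae : Tendsto (fun e : E => ‖a - a * e‖) l (𝓝 0) := by
    have hlim := (continuous_subtype_val.tendsto _).comp
      (hl.tendsto_mul_left ⟨a, elemental.self_mem ℂ a⟩)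
    simpa [Function.comp_def, norm_sub_rev a] using tendsto_iff_norm_sub_tendsto_zero.mp hlim
  have hxe : Tendsto (fun e : E => x * e) l (𝓝 x) := by
    have hbound : Tendsto (fun e : E => √(2 * ‖a - a * e‖)) l (𝓝 0) := by
      simpa using (hae.const_mul 2).sqrt
    refine tendsto_iff_norm_sub_tendsto_zero.mpr
      (squeeze_zero' (.of_forall fun _ => norm_nonneg _) ?_ hbound)
    filter_upwards [hsa, hl.eventually_norm] with e he he₁
    rw [norm_sub_rev]
    exact Real.le_sqrt_of_sq_le (norm_sub_mul_sq_le x he he₁)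
  have hex : Tendsto (fun e : E => e * star x) l (𝓝 (star x)) := by
    refine hxe.star.congr' ?_
    filter_upwards [hsa] with e he
    simp [star_mul, he.star_eq]
  exact ⟨map ((↑) : E → B) l, inferInstance, eventually_map.mpr (.of_forall fun e => e.2),
    tendsto_map'_iff.mpr hxe, tendsto_map'_iff.mpr hex⟩

lemma exists_submodule_coe_eq {S : Set B} (h0 : (0 : B) ∈ S) (hadd : ∀ x ∈ S, ∀ y ∈ S, x + y ∈ S)
    (hsmul : ∀ c : ℂ, ∀ x ∈ S, c • x ∈ S) : ∃ M : Submodule ℂ B, (M : Set B) = S :=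
  ⟨{ carrier := S, add_mem' := fun hx hy => hadd _ hx _ hy, zero_mem' := h0,
      smul_mem' := hsmul }, rfl⟩

lemma IsClosedIdealIn.mul_mem_right {C I : Set B} (hI : IsClosedIdealIn C I) {j c : B}
    (hj : j ∈ I) (hc : c ∈ C) : j * c ∈ I :=
  (hI.2.2.2.2.2 c hc j hj).2

lemma mul_mem_mulSpan {X Y : Set B} {x y : B} (hx : x ∈ X) (hy : y ∈ Y) : x * y ∈ mulSpan X Y :=
  subset_closure (Submodule.subset_span ⟨x, hx, y, hy, rfl⟩)

open NonUnitalStarAlgebra in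
lemma IsClosedIdealIn.elemental_star_mul_self_subset {C I : Set B} (hI : IsClosedIdealIn C I)
    (hC : ∀ x ∈ C, star x ∈ C) {x : B} (hx : x ∈ I) :
    (elemental ℂ (star x * x) : Set B) ⊆ I := by
  obtain ⟨hIC, hclosed, h0, hadd, hsmul, hmul⟩ := hI
  let N : NonUnitalSubalgebra ℂ B :=
    { carrier := I
      add_mem' := fun ha hb => hadd _ ha _ hb
      zero_mem' := h0
      mul_mem' := fun ha hb => (hmul _ (hIC ha) _ hb).1
      smul_mem' := hsmul }
  have ha : star x * x ∈ I := (hmul _ (hC x (hIC hx)) x hx).1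
  have hadj : (adjoin ℂ {star x * x}).toNonUnitalSubalgebra ≤ N := by
    rw [adjoin_toNonUnitalSubalgebra]
    refine NonUnitalAlgebra.adjoin_le ?_
    rw [Set.star_singleton, (IsSelfAdjoint.star_mul_self x).star_eq, Set.union_self,
      Set.singleton_subset_iff]
    exact ha
  exact closure_minimal hadj hclosed

lemma IsClosedIdealIn.star_mem {C I : Set B} (hI : IsClosedIdealIn C I)
    (hC : ∀ x ∈ C, star x ∈ C) {x : B} (hx : x ∈ I) : star x ∈ I := by
  obtain ⟨l, _, hlI, -, hl⟩ := exists_tendsto_mul_elemental x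
  refine hI.2.1.mem_of_tendsto hl ?_
  filter_upwards [hlI] with e he
  exact hI.mul_mem_right (hI.elemental_star_mul_self_subset hC hx he) (hC x (hI.1 hx))

section Orbit

lemma isClosedEmbedding_starAlgEquiv (φ : B ≃⋆ₐ[ℂ] B) : IsClosedEmbedding φ :=
  (NonUnitalStarAlgHom.isometry φ φ.injective).isClosedEmbedding

lemma starAlgEquiv_mul_apply (φ ψ : B ≃⋆ₐ[ℂ] B) (x : B) : (φ * ψ) x = φ (ψ x) := rfl

lemma star_mem_image_of_star_mem {φ : B ≃⋆ₐ[ℂ] B} {S : Set B} (hS : ∀ x ∈ S, star x ∈ S)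
    {y : B} (hy : y ∈ ⇑φ '' S) : star y ∈ ⇑φ '' S := by
  obtain ⟨x, hx, rfl⟩ := hy
  exact ⟨star x, hS x hx, map_star φ x⟩

lemma mapsTo_mulSpan {X Y : Set B} {M : Submodule ℂ B} (hM : IsClosed (M : Set B))
    (f : B →ₗ[ℂ] B) (hf : Continuous f) (h : ∀ x ∈ X, ∀ y ∈ Y, f (x * y) ∈ M) :
    Set.MapsTo f (mulSpan X Y) M := by
  refine fun z hz => closure_minimal ?_ (hM.preimage hf) hz
  change Submodule.span ℂ _ ≤ M.comap f
  rw [Submodule.span_le]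
  rintro _ ⟨x, hx, y, hy, rfl⟩
  exact h x hx y hy

variable (σ : B ≃⋆ₐ[ℂ] B)

lemma mul_pow_apply_mem_image {D : Set B} {J : Submodule ℂ B} (hJ : IsClosed (J : Set B))
    (hJD : ∀ j ∈ J, ∀ e ∈ D, j * e ∈ J) (hsemi : ∀ j ∈ J, ∀ e ∈ D, j * σ e ∈ ⇑σ '' J)
    (hσD : ∀ e ∈ D, σ e ∈ mulSpan D (⇑σ '' D)) (n : ℕ) :
    ∀ j ∈ J, ∀ e ∈ D, j * (σ ^ n) e ∈ ⇑(σ ^ n) '' J := by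
  induction n with
  | zero => exact fun j hj e he => ⟨j * e, hJD j hj e he, rfl⟩
  | succ n ih =>
    intro j hj e he
    let φ := σ ^ (n + 1)
    let f : B →ₗ[ℂ] B := (LinearMap.mulLeft ℂ j).comp ((σ ^ n : B ≃⋆ₐ[ℂ] B) : B →ₗ[ℂ] B)
    have hJφ : IsClosed (⇑φ '' J) := (isClosedEmbedding_starAlgEquiv φ).isClosedMap _ hJ
    refine mapsTo_mulSpan (M := J.map (φ : B →ₗ[ℂ] B)) hJφ f
      ((continuous_const_mul j).comp (isClosedEmbedding_starAlgEquiv _).continuous) ?_ (hσD e he)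
    rintro d hd _ ⟨d', hd', rfl⟩
    obtain ⟨j₁, hj₁, hj₁_eq⟩ := ih j hj d hd
    obtain ⟨j₂, hj₂, hj₂_eq⟩ := hsemi j₁ hj₁ d' hd'
    refine ⟨j₂, hj₂, ?_⟩
    change (σ ^ n) (σ j₂) = j * (σ ^ n) (d * σ d')
    rw [hj₂_eq, map_mul, map_mul, hj₁_eq, mul_assoc]

lemma pow_apply_mul_mem_image {D J : Set B} (hJ : IsClosedIdealIn D J) (hD : ∀ x ∈ D, star x ∈ D)
    {n : ℕ} (hDn : ∀ d ∈ D, ∀ e ∈ D, (σ ^ n) d * e ∈ ⇑(σ ^ n) '' D) :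
    ∀ j ∈ J, ∀ e ∈ D, (σ ^ n) j * e ∈ ⇑(σ ^ n) '' J := by
  intro j hj e he
  obtain ⟨l, _, hlJ, hl, -⟩ := exists_tendsto_mul_elemental j
  have hlim : Tendsto (fun u => (σ ^ n) (j * u) * e) l (𝓝 ((σ ^ n) j * e)) :=
    (((isClosedEmbedding_starAlgEquiv _).continuous.tendsto j).comp hl).mul_const e
  refine ((isClosedEmbedding_starAlgEquiv _).isClosedMap _ hJ.2.1).mem_of_tendsto hlim ?_
  filter_upwards [hlJ] with u hu
  obtain ⟨d, hd, hd_eq⟩ := hDn u (hJ.1 (hJ.elemental_star_mul_self_subset hD hj hu)) e he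
  exact ⟨j * d, hJ.mul_mem_right hj hd, by rw [map_mul, map_mul, hd_eq, mul_assoc]⟩

lemma zpow_mul_zpow_mem_image_max {X Y Z : Set B}
    (h₁ : ∀ n : ℕ, ∀ x ∈ X, ∀ y ∈ Y, x * (σ ^ n) y ∈ ⇑(σ ^ n) '' Z)
    (h₂ : ∀ n : ℕ, ∀ x ∈ X, ∀ y ∈ Y, (σ ^ n) x * y ∈ ⇑(σ ^ n) '' Z) (i k : ℤ) :
    ∀ x ∈ X, ∀ y ∈ Y, (σ ^ i) x * (σ ^ k) y ∈ ⇑(σ ^ max i k) '' Z := by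
  intro x hx y hy
  rcases le_total i k with hik | hki
  · obtain ⟨n, rfl⟩ : ∃ n : ℕ, k = i + n := ⟨(k - i).toNat, by omega⟩
    obtain ⟨z, hz, hz_eq⟩ := h₁ n x hx y hy
    refine ⟨z, hz, ?_⟩
    rw [max_eq_right hik, zpow_add, zpow_natCast, starAlgEquiv_mul_apply, starAlgEquiv_mul_apply,
      hz_eq, map_mul]
  · obtain ⟨n, rfl⟩ : ∃ n : ℕ, i = k + n := ⟨(i - k).toNat, by omega⟩
    obtain ⟨z, hz, hz_eq⟩ := h₂ n x hx y hy
    refine ⟨z, hz, ?_⟩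
    rw [max_eq_left hki, zpow_add, zpow_natCast, starAlgEquiv_mul_apply, starAlgEquiv_mul_apply,
      hz_eq, map_mul]

lemma swap_mul_mem_image_of_star {φ ψ χ : B ≃⋆ₐ[ℂ] B} {X Y Z : Set B} (hX : ∀ x ∈ X, star x ∈ X)
    (hY : ∀ y ∈ Y, star y ∈ Y) (hZ : ∀ z ∈ Z, star z ∈ Z)
    (h : ∀ x ∈ X, ∀ y ∈ Y, φ x * ψ y ∈ ⇑χ '' Z) : ∀ y ∈ Y, ∀ x ∈ X, ψ y * φ x ∈ ⇑χ '' Z := by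
  intro y hy x hx
  simpa [star_mul, map_star] using
    star_mem_image_of_star_mem hZ (h (star x) (hX x hx) (star y) (hY y hy))

lemma Dsig_eq_closure_span (M : Submodule ℂ B) :
    Dsig σ M = closure (Submodule.span ℂ (⋃ p : ℤ, ⇑(σ ^ p) '' (M : Set B)) : Set B) := by
  refine congrArg closure (Set.Subset.antisymm ?_ fun x hx => ?_)
  · rintro _ ⟨_, ⟨n, rfl⟩, f, hf, rfl⟩
    exact Submodule.sum_mem _ fun j hj => Submodule.subset_span (Set.mem_iUnion.mpr ⟨j, hf j hj⟩)
  let N : ℤ → Submodule ℂ B := fun p => M.map ((σ ^ p : B ≃⋆ₐ[ℂ] B) : B →ₗ[ℂ] B)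
  have hspan : Submodule.span ℂ (⋃ p : ℤ, ⇑(σ ^ p) '' (M : Set B)) = ⨆ p, N p := by
    simp only [Submodule.iSup_eq_span, N, Submodule.map_coe]
    rfl
  rw [SetLike.mem_coe, hspan, Submodule.mem_iSup_iff_exists_finset] at hx
  obtain ⟨s, hs⟩ := hx
  set n := s.sup Int.natAbs + 1
  have hsub : ∀ i ∈ s, i ∈ Finset.Icc (-(n : ℤ) - 1) (n - 1) := fun i hi => by
    have := Finset.le_sup (f := Int.natAbs) hi
    simp only [Finset.mem_Icc, n]
    omega
  obtain ⟨μ, hμ⟩ := (Submodule.mem_iSup_finset_iff_exists_sum N x).mp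
    (SetLike.le_def.mp (biSup_mono hsub) hs)
  exact Set.mem_iUnion.mpr ⟨n, fun j => μ j, fun j _ => (μ j).2, hμ.symm⟩

lemma mul_mem_closure_span {X Y Z : Set B} (h : ∀ x ∈ X, ∀ y ∈ Y, x * y ∈ Z) {a b : B}
    (ha : a ∈ closure (Submodule.span ℂ X : Set B))
    (hb : b ∈ closure (Submodule.span ℂ Y : Set B)) :
    a * b ∈ closure (Submodule.span ℂ Z : Set B) := by
  refine map_mem_closure₂ continuous_mul ha hb fun x hx y hy => ?_
  have hxy := Submodule.apply_mem_map₂ (LinearMap.mul ℂ B) (SetLike.mem_coe.mp hx)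
    (SetLike.mem_coe.mp hy)
  rw [Submodule.map₂_span_span] at hxy
  exact Submodule.span_mono (Set.image2_subset_iff.mpr h) hxy

lemma image_closure_span_iUnion_zpow (S : Set B) :
    ⇑σ '' closure (Submodule.span ℂ (⋃ p : ℤ, ⇑(σ ^ p) '' S) : Set B) =
      closure (Submodule.span ℂ (⋃ p : ℤ, ⇑(σ ^ p) '' S) : Set B) := by
  rw [← (isClosedEmbedding_starAlgEquiv σ).closure_image_eq]
  have hshift : ⇑σ '' ⋃ p : ℤ, ⇑(σ ^ p) '' S = ⋃ p : ℤ, ⇑(σ ^ p) '' S := by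
    have hstep : ∀ p : ℤ, ⇑σ '' (⇑(σ ^ p) '' S) = ⇑(σ ^ (1 + p)) '' S := fun p => by
      rw [Set.image_image, zpow_add, zpow_one]
      rfl
    simp_rw [Set.image_iUnion, hstep]
    exact (Equiv.addLeft (1 : ℤ)).surjective.iUnion_comp (fun p => ⇑(σ ^ p) '' S)
  calc closure (⇑σ '' (Submodule.span ℂ (⋃ p : ℤ, ⇑(σ ^ p) '' S) : Set B))
      = closure (Submodule.span ℂ (⇑σ '' ⋃ p : ℤ, ⇑(σ ^ p) '' S) : Set B) :=
        congrArg (closure ∘ SetLike.coe) (Submodule.map_span (σ : B →ₗ[ℂ] B) _)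
    _ = _ := by rw [hshift]

lemma isClosedIdealIn_Dsig {D J : Submodule ℂ B} (hJD : (J : Set B) ⊆ D)
    (hJmul : ∀ i k : ℤ, ∀ j ∈ J, ∀ e ∈ D, (σ ^ i) j * (σ ^ k) e ∈ ⇑(σ ^ max i k) '' J)
    (hmulJ : ∀ i k : ℤ, ∀ e ∈ D, ∀ j ∈ J, (σ ^ i) e * (σ ^ k) j ∈ ⇑(σ ^ max i k) '' J) :
    IsClosedIdealIn (Dsig σ D) (Dsig σ J) := by
  rw [Dsig_eq_closure_span, Dsig_eq_closure_span]
  set JS := Submodule.span ℂ (⋃ p : ℤ, ⇑(σ ^ p) '' (J : Set B))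
  refine ⟨closure_mono (Submodule.span_mono (Set.iUnion_mono fun p => Set.image_mono hJD)),
    isClosed_closure, subset_closure JS.zero_mem,
    fun x hx y hy => JS.topologicalClosure.add_mem hx hy,
    fun c x hx => JS.topologicalClosure.smul_mem c hx, fun e he j hj => ⟨?_, ?_⟩⟩
  · refine mul_mem_closure_span ?_ he hj
    rintro _ ⟨_, ⟨i, rfl⟩, e, he, rfl⟩ _ ⟨_, ⟨k, rfl⟩, j, hj, rfl⟩
    exact Set.mem_iUnion.mpr ⟨_, hmulJ i k e he j hj⟩
  · refine mul_mem_closure_span ?_ hj he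
    rintro _ ⟨_, ⟨i, rfl⟩, j, hj, rfl⟩ _ ⟨_, ⟨k, rfl⟩, e, he, rfl⟩
    exact Set.mem_iUnion.mpr ⟨_, hJmul i k j hj e he⟩

end Orbit

/-- if `J` is a semi-invariant closed two-sided ideal of `D`, then
`σ^i(J)·σ^k(D) ⊆ σ^{max(i,k)}(J)` elementwise, and `J_σ` is a σ-invariant closed two-sided
ideal of `D_σ`. -/
theorem stmt_14 (σ : B ≃⋆ₐ[ℂ] B) (D : Set B) (hHK : IsHKSystem σ D)
    (J : Set B) (hJ : IsClosedIdealIn D J)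
    (hsemi : ∀ j ∈ J, ∀ e ∈ D, j * σ e ∈ ⇑σ '' J) :
    (∀ i k : ℤ, ∀ j ∈ J, ∀ e ∈ D,
      (σ ^ i) j * (σ ^ k) e ∈ ⇑(σ ^ max i k) '' J) ∧
    IsClosedIdealIn (Dsig σ D) (Dsig σ J) ∧
    ⇑σ '' Dsig σ J = Dsig σ J := by
  obtain ⟨⟨hDc, hD0, hDadd, hDsmul, hDmul, hDstar⟩, hMS, -, -⟩ := hHK
  have hJstar : ∀ x ∈ J, star x ∈ J := fun x hx => hJ.star_mem hDstar hx
  obtain ⟨hJD, hJc, hJ0, hJadd, hJsmul, -⟩ := id hJ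
  obtain ⟨D, rfl⟩ := exists_submodule_coe_eq hD0 hDadd hDsmul
  obtain ⟨J, rfl⟩ := exists_submodule_coe_eq hJ0 hJadd hJsmul
  have hσD : ∀ e ∈ D, σ e ∈ mulSpan D (⇑σ '' D) := fun e he => by
    rw [hMS]
    exact ⟨e, he, rfl⟩
  have hDsemi : ∀ d ∈ D, ∀ e ∈ D, d * σ e ∈ ⇑σ '' D := fun d hd e he => by
    rw [← hMS]
    exact mul_mem_mulSpan hd ⟨e, he, rfl⟩
  have hDl (n : ℕ) : ∀ d ∈ D, ∀ e ∈ D, (σ ^ n) d * e ∈ ⇑(σ ^ n) '' D :=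
    swap_mul_mem_image_of_star (φ := 1) hDstar hDstar hDstar
      (mul_pow_apply_mem_image σ hDc hDmul hDsemi hσD n)
  have part1 := zpow_mul_zpow_mem_image_max σ
    (mul_pow_apply_mem_image σ hJc (fun j hj e he => hJ.mul_mem_right hj he) hsemi hσD)
    (fun n => pow_apply_mul_mem_image σ hJ hDstar (hDl n))
  refine ⟨part1, isClosedIdealIn_Dsig σ hJD part1 fun i k e he j hj => ?_, ?_⟩
  · rw [max_comm]
    exact swap_mul_mem_image_of_star hJstar hDstar hJstar (part1 k i) e he j hj
  · rw [Dsig_eq_closure_span, image_closure_span_iUnion_zpow]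

end
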